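/- Let K be a field of characteristic 2, V a finite-dimensional F₂-vector space with non-degenerate alternate form B, and g the Kaplansky algebra over K with basis {e_u : u ∈ Γ} for a J-system Γ. Define ĝ = g ⊕ (K ⊗ V*) with brackets [α,β] = 0, [α, e_u] = α(u) e_u for α, β ∈ V*, and squaring (aα)^{[2]} = a²α, (a e_u)^{[2]} = a² B_u, where B_u ∈ V* is v ↦ B(u,v). Then the squaring is compatible with the bracket: [x^{[2]}, y] = [x,[x,y]] for x = a e_u and any basis element y = e_v or y = β ∈ V*. -/

import Mathlib

/-!
For `x = a e_u`, `[x, e_v] = a B(u,v) e_{u+v}` when `u ≠ v` and `u + v ∈ Γ`, and `0` otherwise.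
If `B(u,v) = 1` the J-system axiom puts `u + v` in `Γ`, and since `u + (u + v) = v` a second
bracket returns to `e_v` with coefficient `a² B(u,v) B(u,u+v) = a² B(u,v)`, `B` being alternate;
this is `[x^{[2]}, e_v] = a² B_u(v) e_v`. On `V*` both sides vanish, because `[x, β]` is a multiple
of `e_u` and `[e_u, e_u] = 0`.
-/

open Finset

/-- Embedding of `F₂` into `K`. -/
def z2k (K : Type*) [Field K] (a : ZMod 2) : K := if a = 1 then 1 else 0

/-- The restricted closure `ĝ = g ⊕ (K ⊗ V*)` of a Kaplansky algebra: first
component spanned by `{e_u : u ∈ Γ}`, second the space of `K`-valued functionals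
on `V` (containing `K ⊗ V*`). -/
abbrev hatg (K : Type*) {n : ℕ} (Γ : Finset (Fin n → ZMod 2)) :=
  ({u // u ∈ Γ} → K) × ((Fin n → ZMod 2) → K)

variable {K : Type*} [Field K] {n : ℕ}

/-- The bracket on `ĝ`: the Kaplansky bracket on `g`, `[α,β] = 0`, and
`[α, e_u] = α(u) e_u`. -/
def hbr (B : (Fin n → ZMod 2) → (Fin n → ZMod 2) → ZMod 2)
    (Γ : Finset (Fin n → ZMod 2)) (x y : hatg K Γ) : hatg K Γ :=
  ((fun w : {u // u ∈ Γ} => ∑ u : {u // u ∈ Γ}, ∑ v : {u // u ∈ Γ},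
      x.1 u * y.1 v *
        (if u.1 ≠ v.1 ∧ u.1 + v.1 ∈ Γ ∧ w.1 = u.1 + v.1
          then z2k K (B u v) else 0))
    + (fun w : {u // u ∈ Γ} => x.2 w.1 * y.1 w + y.2 w.1 * x.1 w),
   0)

/-- The basis element `e_u ∈ ĝ`. -/
def eb (Γ : Finset (Fin n → ZMod 2)) (u : {u // u ∈ Γ}) : hatg K Γ :=
  (fun w => if w = u then 1 else 0, 0)

/-- An element `β ∈ K ⊗ V* ⊂ ĝ`. -/
def dualel (Γ : Finset (Fin n → ZMod 2)) (β : (Fin n → ZMod 2) → K) : hatg K Γ :=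
  (0, β)

/-- The square `(a e_u)^{[2]} = a² B_u ∈ V*`, where `B_u : v ↦ B(u,v)`. -/
def sqe (B : (Fin n → ZMod 2) → (Fin n → ZMod 2) → ZMod 2)
    (Γ : Finset (Fin n → ZMod 2)) (a : K) (u : {u // u ∈ Γ}) : hatg K Γ :=
  (0, fun v => a * a * z2k K (B u v))

section Bracket

variable (B : (Fin n → ZMod 2) → (Fin n → ZMod 2) → ZMod 2) (Γ : Finset (Fin n → ZMod 2))

lemma hbr_smul_right (x y : hatg K Γ) (c : K) :
    hbr B Γ x (c • y) = c • hbr B Γ x y := by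
  refine Prod.ext (funext fun w => ?_) (smul_zero c).symm
  simp only [hbr, Prod.smul_fst, Prod.smul_snd, Pi.add_apply, Pi.smul_apply, smul_eq_mul,
    mul_add, Finset.mul_sum]
  congr 1
  · exact Finset.sum_congr rfl fun _ _ => Finset.sum_congr rfl fun _ _ => by ring
  · ring

lemma hbr_zero_right (x : hatg K Γ) : hbr B Γ x 0 = 0 := by
  simpa using hbr_smul_right B Γ x 0 0

lemma hbr_smul_eb_eb (a : K) (u v : {u // u ∈ Γ}) :
    hbr B Γ (a • eb Γ u) (eb Γ v) =
      (fun w => if u.1 ≠ v.1 ∧ u.1 + v.1 ∈ Γ ∧ w.1 = u.1 + v.1 then a * z2k K (B u v) else 0,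
        0) := by
  refine Prod.ext (funext fun w => ?_) rfl
  simp only [hbr, eb, Prod.smul_fst, Prod.smul_snd, Pi.add_apply, Pi.smul_apply, smul_eq_mul,
    Pi.zero_apply, mul_ite, mul_one, mul_zero, ite_mul, zero_mul]
  rw [Fintype.sum_eq_single u fun x hx => Finset.sum_eq_zero fun y _ => by simp [hx],
    Fintype.sum_eq_single v fun y hy => by simp [hy]]
  simp

lemma hbr_smul_eb_eb_of_add_eq {a : K} {u v w : {u // u ∈ Γ}} (huv : u.1 ≠ v.1)
    (hw : u.1 + v.1 = w.1) :
    hbr B Γ (a • eb Γ u) (eb Γ v) = (a * z2k K (B u v)) • (eb Γ w : hatg K Γ) := by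
  rw [hbr_smul_eb_eb]
  refine Prod.ext (funext fun w' => ?_) (smul_zero _).symm
  by_cases h : w' = w
  · simp [eb, huv, hw, h]
  · simp [eb, hw, h]

lemma hbr_smul_eb_eb_of_apply_eq_zero {a : K} {u v : {u // u ∈ Γ}} (h : B u v = 0) :
    hbr B Γ (a • eb Γ u) (eb Γ v) = (0 : hatg K Γ) := by
  rw [hbr_smul_eb_eb]
  refine Prod.ext (funext fun w => ?_) rfl
  simp [h, z2k]

lemma hbr_smul_eb_self (a : K) (u : {u // u ∈ Γ}) :
    hbr B Γ (a • eb Γ u) (eb Γ u) = (0 : hatg K Γ) := by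
  rw [hbr_smul_eb_eb]
  refine Prod.ext (funext fun w => ?_) rfl
  simp

lemma hbr_smul_eb_dualel (a : K) (u : {u // u ∈ Γ}) (β : (Fin n → ZMod 2) → K) :
    hbr B Γ (a • eb Γ u) (dualel Γ β) = (a * β u) • eb Γ u := by
  refine Prod.ext (funext fun w => ?_) (smul_zero _).symm
  by_cases hw : w = u <;> simp [hbr, eb, dualel, hw, mul_comm]

lemma hbr_dualel_eb (α : (Fin n → ZMod 2) → K) (v : {u // u ∈ Γ}) :
    hbr B Γ (dualel Γ α) (eb Γ v) = α v • eb Γ v := by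
  refine Prod.ext (funext fun w => ?_) (smul_zero _).symm
  by_cases hw : w = v <;> simp [hbr, eb, dualel, hw]

lemma hbr_dualel_dualel (α β : (Fin n → ZMod 2) → K) :
    hbr B Γ (dualel Γ α) (dualel Γ β) = (0 : hatg K Γ) := by
  refine Prod.ext (funext fun w => ?_) rfl
  simp [hbr, dualel]

lemma sqe_eq_dualel (a : K) (u : {u // u ∈ Γ}) :
    sqe B Γ a u = dualel Γ (fun v => a * a * z2k K (B u v)) := rfl

end Bracket

section JSystem

variable {V : Type*} [AddCommGroup V] [Module (ZMod 2) V] {B : LinearMap.BilinForm (ZMod 2) V}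

lemma apply_add_right_of_alt (halt : ∀ w, B w w = 0) (u v : V) : B u (u + v) = B u v := by
  simp [halt]

lemma ne_of_apply_eq_one_of_alt (halt : ∀ w, B w w = 0) {u v : V} (h : B u v = 1) : u ≠ v := by
  rintro rfl
  simp [halt] at h

end JSystem

lemma hbr_smul_eb_hbr_smul_eb_eb {B : LinearMap.BilinForm (ZMod 2) (Fin n → ZMod 2)}
    (halt : ∀ w, B w w = 0) {Γ : Finset (Fin n → ZMod 2)} (h0 : (0 : Fin n → ZMod 2) ∉ Γ)
    (hJ : ∀ u v, u ∈ Γ → v ∈ Γ → u ≠ v → B u v = 1 → u + v ∈ Γ) (a : K) (u v : {u // u ∈ Γ}) :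
    hbr (fun x y => B x y) Γ (a • eb Γ u) (hbr (fun x y => B x y) Γ (a • eb Γ u) (eb Γ v))
      = (a * a * z2k K (B u v)) • (eb Γ v : hatg K Γ) := by
  rcases (by decide : ∀ b : ZMod 2, b = 0 ∨ b = 1) (B u v) with h | h
  · rw [hbr_smul_eb_eb_of_apply_eq_zero _ _ h, hbr_zero_right]
    simp [h, z2k]
  · have huv : u.1 ≠ v.1 := ne_of_apply_eq_one_of_alt halt h
    let s : {u // u ∈ Γ} := ⟨u + v, hJ _ _ u.2 v.2 huv h⟩
    have hus : u.1 ≠ s.1 := fun h' => h0 (left_eq_add.mp h' ▸ v.2)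
    have hsv : u.1 + s.1 = v.1 := by
      rw [← add_assoc, ZModModule.add_self, zero_add]
    rw [hbr_smul_eb_eb_of_add_eq _ _ (w := s) huv rfl, hbr_smul_right,
      hbr_smul_eb_eb_of_add_eq _ _ hus hsv, smul_smul]
    simp [h, z2k, s, apply_add_right_of_alt halt]

theorem stmt17_general (K : Type*) [Field K] {n : ℕ}
    (B : LinearMap.BilinForm (ZMod 2) (Fin n → ZMod 2))
    (halt : ∀ w, B w w = 0)
    (Γ : Finset (Fin n → ZMod 2)) (h0 : (0 : Fin n → ZMod 2) ∉ Γ)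
    (hJ : ∀ u v, u ∈ Γ → v ∈ Γ → u ≠ v → B u v = 1 → u + v ∈ Γ)
    (a : K) (u v : {u // u ∈ Γ}) (β : (Fin n → ZMod 2) → K) :
    hbr (fun x y => B x y) Γ (sqe (fun x y => B x y) Γ a u) (eb Γ v)
      = hbr (fun x y => B x y) Γ (a • eb Γ u)
          (hbr (fun x y => B x y) Γ (a • eb Γ u) (eb Γ v)) ∧
    hbr (fun x y => B x y) Γ (sqe (fun x y => B x y) Γ a u) (dualel Γ β)
      = hbr (fun x y => B x y) Γ (a • eb Γ u)
          (hbr (fun x y => B x y) Γ (a • eb Γ u) (dualel Γ β)) := by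
  rw [sqe_eq_dualel]
  constructor
  · rw [hbr_dualel_eb, hbr_smul_eb_hbr_smul_eb_eb halt h0 hJ]
  · rw [hbr_dualel_dualel, hbr_smul_eb_dualel, hbr_smul_right, hbr_smul_eb_self, smul_zero]

/-- for a non-degenerate alternate symmetric bilinear form `B` on a
finite-dimensional `F₂`-space and a J-system `Γ`, the squaring of the restricted
closure `ĝ` is compatible with the bracket: `[x^{[2]}, y] = [x,[x,y]]` for
`x = a e_u` and `y = e_v` or `y = β ∈ V*`. -/
theorem stmt17 (K : Type*) [Field K] [CharP K 2] {n : ℕ}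
    (B : LinearMap.BilinForm (ZMod 2) (Fin n → ZMod 2))
    (hsym : ∀ u v, B u v = B v u) (halt : ∀ w, B w w = 0)
    (hnd : ∀ u, (∀ v, B u v = 0) → u = 0)
    (Γ : Finset (Fin n → ZMod 2)) (h0 : (0 : Fin n → ZMod 2) ∉ Γ)
    (hJ : ∀ u v, u ∈ Γ → v ∈ Γ → u ≠ v → B u v = 1 → u + v ∈ Γ)
    (a : K) (u v : {u // u ∈ Γ}) (β : (Fin n → ZMod 2) → K) :
    hbr (fun x y => B x y) Γ (sqe (fun x y => B x y) Γ a u) (eb Γ v)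
      = hbr (fun x y => B x y) Γ (a • eb Γ u)
          (hbr (fun x y => B x y) Γ (a • eb Γ u) (eb Γ v)) ∧
    hbr (fun x y => B x y) Γ (sqe (fun x y => B x y) Γ a u) (dualel Γ β)
      = hbr (fun x y => B x y) Γ (a • eb Γ u)
          (hbr (fun x y => B x y) Γ (a • eb Γ u) (dualel Γ β)) :=
  stmt17_general K B halt Γ h0 hJ a u v β
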